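/- Let g(y,z) be a function on I×𝕋 with g ∈ H¹(I×𝕋), g(±1,·) = 0, and ∫_𝕋 g(y,z) dz = 0 for every y ∈ I. Then ‖g‖³_{L³(I×𝕋)} ≤ (9/4)‖g‖_{L¹(I×𝕋)}‖∇g‖²_{L²(I×𝕋)}. -/

import Mathlib

/-!
Put `u = |g|^{3/2}`, a `C¹` function with `|∇u| ≤ (3/2) |g|^{1/2} |∇g|`. It vanishes somewhere
on every segment `{y} × 𝕋` (the zero `z`-mean and the intermediate value theorem) and on every
segment `I × {z}` (at `y = 1`). The fundamental theorem of calculus along both segments through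
`(y, z)` gives `u(y,z)² ≤ (∫_I |∂_y u|(·, z)) (∫_𝕋 |∂_z u|(y, ·))`, and integrating over
`I × 𝕋` gives `‖g‖³_{L³} = ‖u‖²_{L²} ≤ ‖∂_y u‖_{L¹} ‖∂_z u‖_{L¹}`. By Cauchy–Schwarz each factor
is at most `(3/2) ‖g‖_{L¹}^{1/2} ‖∇g‖_{L²}`.
-/

open MeasureTheory Real Set

noncomputable section

/-- Points `(y, z)` of the cross-section `I × 𝕋`. -/
abbrev Pt2 := ℝ × ℝ

/-- The cross-section `I × 𝕋` with `I = [-1, 1]` and `𝕋 = [0, 2π)` (up to null sets). -/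
def Dom2 : Set Pt2 := Icc (-1:ℝ) 1 ×ˢ Icc (0:ℝ) (2*π)

/-- Partial derivative in `y`. -/
def qy (f : Pt2 → ℝ) (p : Pt2) : ℝ := fderiv ℝ f p (1, 0)
/-- Partial derivative in `z`. -/
def qz (f : Pt2 → ℝ) (p : Pt2) : ℝ := fderiv ℝ f p (0, 1)
/-- Laplacian on `I × 𝕋`. -/
def lap2 (f : Pt2 → ℝ) (p : Pt2) : ℝ := qy (qy f) p + qz (qz f) p
/-- Length of the gradient. -/
def grad2 (f : Pt2 → ℝ) (p : Pt2) : ℝ := Real.sqrt ((qy f p)^2 + (qz f p)^2)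

/-- `L^r` norm over the cross-section. -/
def Lp2 (r : ℝ) (f : Pt2 → ℝ) : ℝ := (∫ q in Dom2, |f q| ^ r) ^ (1/r)

/-- `H¹` norm over the cross-section. -/
def H1n2 (f : Pt2 → ℝ) : ℝ := Lp2 2 f + Lp2 2 (qy f) + Lp2 2 (qz f)

/-- Periodicity (period `2π`) in `z` for a function on the cross-section. -/
def PerZ2 (f : Pt2 → ℝ) : Prop := ∀ y z : ℝ, f (y, z + 2*π) = f (y, z)

theorem abs_le_setIntegral_abs_deriv_of_eq_zero {u u' : ℝ → ℝ} {a b c x : ℝ}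
    (hu : ∀ t ∈ Icc a b, HasDerivAt u (u' t) t) (hu' : IntegrableOn u' (Icc a b))
    (hc : c ∈ Icc a b) (hx : x ∈ Icc a b) (huc : u c = 0) :
    |u x| ≤ ∫ t in Icc a b, |u' t| := by
  have hsub : uIcc c x ⊆ Icc a b := uIcc_subset_Icc hc hx
  have hftc : ∫ t in c..x, u' t = u x - u c :=
    intervalIntegral.integral_eq_sub_of_hasDerivAt (fun t ht => hu t (hsub ht))
      (hu'.mono_set hsub).intervalIntegrable
  calc |u x| = ‖∫ t in c..x, u' t‖ := by rw [hftc, huc, sub_zero, Real.norm_eq_abs]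
    _ ≤ ∫ t in uIoc c x, ‖u' t‖ := intervalIntegral.norm_integral_le_integral_norm_uIoc
    _ ≤ ∫ t in Icc a b, |u' t| :=
      setIntegral_mono_set hu'.abs (Filter.Eventually.of_forall fun t => abs_nonneg _)
        (uIoc_subset_uIcc.trans hsub).eventuallyLE

theorem exists_mem_Icc_eq_zero_of_intervalIntegral_eq_zero {v : ℝ → ℝ} {a b : ℝ}
    (hab : a < b) (hv : ContinuousOn v (Icc a b)) (h : ∫ t in a..b, v t = 0) :
    ∃ c ∈ Icc a b, v c = 0 := by
  obtain ⟨c, hc, hvc⟩ := exists_eq_interval_average hab.ne (by rwa [uIcc_of_le hab.le])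
  refine ⟨c, ?_, by rw [hvc, interval_average_eq, h, smul_zero]⟩
  rw [uIoo_of_le hab.le] at hc
  exact Ioo_subset_Icc_self hc

theorem hasDerivAt_qy {u : Pt2 → ℝ} (hu : ContDiff ℝ 1 u) (y z : ℝ) :
    HasDerivAt (fun t => u (t, z)) (qy u (y, z)) y :=
  ((hu.differentiable one_ne_zero (y, z)).hasFDerivAt).comp_hasDerivAt y
    ((hasDerivAt_id y).prodMk (hasDerivAt_const y z))

theorem hasDerivAt_qz {u : Pt2 → ℝ} (hu : ContDiff ℝ 1 u) (y z : ℝ) :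
    HasDerivAt (fun s => u (y, s)) (qz u (y, z)) z :=
  ((hu.differentiable one_ne_zero (y, z)).hasFDerivAt).comp_hasDerivAt z
    ((hasDerivAt_const z y).prodMk (hasDerivAt_id z))

theorem continuous_qy {u : Pt2 → ℝ} (hu : ContDiff ℝ 1 u) : Continuous (qy u) :=
  (hu.continuous_fderiv one_ne_zero).clm_apply continuous_const

theorem continuous_qz {u : Pt2 → ℝ} (hu : ContDiff ℝ 1 u) : Continuous (qz u) :=
  (hu.continuous_fderiv one_ne_zero).clm_apply continuous_const

theorem setIntegral_sq_le_setIntegral_abs_qy_mul_setIntegral_abs_qz {u : Pt2 → ℝ}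
    (hu : ContDiff ℝ 1 u) {a b c d : ℝ} (hy : ∀ z ∈ Icc c d, ∃ y ∈ Icc a b, u (y, z) = 0)
    (hz : ∀ y ∈ Icc a b, ∃ z ∈ Icc c d, u (y, z) = 0) :
    ∫ p in Icc a b ×ˢ Icc c d, u p ^ 2 ≤
      (∫ p in Icc a b ×ˢ Icc c d, |qy u p|) * ∫ p in Icc a b ×ˢ Icc c d, |qz u p| := by
  set μ := volume.restrict (Icc a b)
  set ν := volume.restrict (Icc c d)
  have hR : volume.restrict (Icc a b ×ˢ Icc c d) = μ.prod ν := by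
    rw [Measure.volume_eq_prod, Measure.prod_restrict]
  have hint : ∀ f : Pt2 → ℝ, Continuous f → IntegrableOn f (Icc a b ×ˢ Icc c d) := fun f hf =>
    hf.continuousOn.integrableOn_compact (isCompact_Icc.prod isCompact_Icc)
  have hqy : Integrable (fun p => |qy u p|) (μ.prod ν) := hR ▸ hint _ (continuous_qy hu).abs
  have hqz : Integrable (fun p => |qz u p|) (μ.prod ν) := hR ▸ hint _ (continuous_qz hu).abs
  set A : ℝ → ℝ := fun z => ∫ t, |qy u (t, z)| ∂μ
  set B : ℝ → ℝ := fun y => ∫ s, |qz u (y, s)| ∂ν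
  have hA : ∀ p ∈ Icc a b ×ˢ Icc c d, |u p| ≤ A p.2 := by
    rintro ⟨y, z⟩ ⟨hy', hz'⟩
    obtain ⟨y₀, hy₀, hu₀⟩ := hy z hz'
    exact abs_le_setIntegral_abs_deriv_of_eq_zero (fun t _ => hasDerivAt_qy hu t z)
      (((continuous_qy hu).comp (continuous_id.prodMk continuous_const)).integrableOn_Icc)
      hy₀ hy' hu₀
  have hB : ∀ p ∈ Icc a b ×ˢ Icc c d, |u p| ≤ B p.1 := by
    rintro ⟨y, z⟩ ⟨hy', hz'⟩
    obtain ⟨z₀, hz₀, hu₀⟩ := hz y hy'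
    exact abs_le_setIntegral_abs_deriv_of_eq_zero (fun s _ => hasDerivAt_qz hu y s)
      (((continuous_qz hu).comp (continuous_const.prodMk continuous_id)).integrableOn_Icc)
      hz₀ hz' hu₀
  have hpt : ∀ p ∈ Icc a b ×ˢ Icc c d, u p ^ 2 ≤ B p.1 * A p.2 := fun p hp => by
    rw [← sq_abs, sq]
    exact mul_le_mul (hB p hp) (hA p hp) (abs_nonneg _) ((abs_nonneg _).trans (hB p hp))
  calc ∫ p in Icc a b ×ˢ Icc c d, u p ^ 2
      ≤ ∫ p in Icc a b ×ˢ Icc c d, B p.1 * A p.2 :=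
        setIntegral_mono_on (hint _ (hu.continuous.pow 2))
          (by rw [IntegrableOn, hR]
              exact hqz.integral_prod_left.mul_prod hqy.integral_prod_right)
          (measurableSet_Icc.prod measurableSet_Icc) hpt
    _ = (∫ y, B y ∂μ) * ∫ z, A z ∂ν := by rw [hR, integral_prod_mul]
    _ = (∫ p in Icc a b ×ˢ Icc c d, |qz u p|) * ∫ p in Icc a b ×ˢ Icc c d, |qy u p| := by
        rw [hR, integral_prod _ hqz, integral_prod_symm _ hqy]
    _ = _ := mul_comm _ _

theorem sq_integral_mul_le_integral_sq_mul_integral_sq {α : Type*} [MeasurableSpace α]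
    {μ : Measure α} {f h : α → ℝ} (hf : Integrable (fun a => f a ^ 2) μ)
    (hh : Integrable (fun a => h a ^ 2) μ) (hfh : Integrable (fun a => f a * h a) μ) :
    (∫ a, f a * h a ∂μ) ^ 2 ≤ (∫ a, f a ^ 2 ∂μ) * ∫ a, h a ^ 2 ∂μ := by
  have hquad : ∀ t : ℝ, 0 ≤ (∫ a, f a ^ 2 ∂μ) * (t * t) + (-2 * ∫ a, f a * h a ∂μ) * t
      + ∫ a, h a ^ 2 ∂μ := fun t => by
    have hexp : ∫ a, (t * f a - h a) ^ 2 ∂μ =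
        ∫ a, (t * t * f a ^ 2 + -2 * t * (f a * h a)) + h a ^ 2 ∂μ :=
      integral_congr_ae (Filter.Eventually.of_forall fun a => by ring)
    have hsum := integral_add ((hf.const_mul (t * t)).add (hfh.const_mul (-2 * t))) hh
    have hsum' := integral_add (hf.const_mul (t * t)) (hfh.const_mul (-2 * t))
    simp only [Pi.add_apply, integral_const_mul] at hsum hsum'
    have hnonneg : 0 ≤ ∫ a, (t * f a - h a) ^ 2 ∂μ := integral_nonneg fun a => sq_nonneg _
    linarith
  have := discrim_le_zero hquad
  rw [discrim] at this
  nlinarith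

theorem abs_deriv_abs_rpow {p : ℝ} (hp : 1 < p) (x : ℝ) :
    |p * |x| ^ (p - 2) * x| = p * |x| ^ (p - 1) := by
  rcases eq_or_ne x 0 with rfl | hx
  · simp [Real.zero_rpow (by linarith : p - 1 ≠ 0)]
  · rw [abs_mul, abs_mul, abs_of_pos (by linarith : 0 < p),
      abs_of_nonneg (Real.rpow_nonneg (abs_nonneg x) _), mul_assoc,
      ← Real.rpow_add_one (abs_ne_zero.2 hx)]
    ring_nf

theorem abs_rpow_three_halves_sq (x : ℝ) : (|x| ^ (3 / 2 : ℝ)) ^ 2 = |x| ^ 3 := by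
  rw [← Real.rpow_natCast, ← Real.rpow_mul (abs_nonneg x)]
  norm_num

theorem qy_comp {ψ : ℝ → ℝ} {ψ' : ℝ} {g : Pt2 → ℝ} {p : Pt2} (hψ : HasDerivAt ψ ψ' (g p))
    (hg : DifferentiableAt ℝ g p) : qy (fun q => ψ (g q)) p = ψ' * qy g p := by
  rw [qy, show (fun q => ψ (g q)) = ψ ∘ g from rfl,
    (hψ.comp_hasFDerivAt p hg.hasFDerivAt).fderiv]
  simp [qy]

theorem qz_comp {ψ : ℝ → ℝ} {ψ' : ℝ} {g : Pt2 → ℝ} {p : Pt2} (hψ : HasDerivAt ψ ψ' (g p))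
    (hg : DifferentiableAt ℝ g p) : qz (fun q => ψ (g q)) p = ψ' * qz g p := by
  rw [qz, show (fun q => ψ (g q)) = ψ ∘ g from rfl,
    (hψ.comp_hasFDerivAt p hg.hasFDerivAt).fderiv]
  simp [qz]

theorem abs_qy_le_grad2 (g : Pt2 → ℝ) (p : Pt2) : |qy g p| ≤ grad2 g p :=
  Real.abs_le_sqrt (le_add_of_nonneg_right (sq_nonneg _))

theorem abs_qz_le_grad2 (g : Pt2 → ℝ) (p : Pt2) : |qz g p| ≤ grad2 g p :=
  Real.abs_le_sqrt (le_add_of_nonneg_left (sq_nonneg _))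

section ThreeHalvesPower

variable {g : Pt2 → ℝ}

theorem abs_qy_abs_rpow_three_halves_le (hg : ContDiff ℝ 1 g) (p : Pt2) :
    |qy (fun q => |g q| ^ (3 / 2 : ℝ)) p| ≤ 3 / 2 * (√|g p| * grad2 g p) := by
  rw [qy_comp (hasDerivAt_abs_rpow (g p) (by norm_num)) (hg.differentiable one_ne_zero p),
    abs_mul, abs_deriv_abs_rpow (by norm_num), show (3 / 2 : ℝ) - 1 = 1 / 2 by norm_num,
    ← Real.sqrt_eq_rpow, mul_assoc]
  gcongr
  exact abs_qy_le_grad2 g p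

theorem abs_qz_abs_rpow_three_halves_le (hg : ContDiff ℝ 1 g) (p : Pt2) :
    |qz (fun q => |g q| ^ (3 / 2 : ℝ)) p| ≤ 3 / 2 * (√|g p| * grad2 g p) := by
  rw [qz_comp (hasDerivAt_abs_rpow (g p) (by norm_num)) (hg.differentiable one_ne_zero p),
    abs_mul, abs_deriv_abs_rpow (by norm_num), show (3 / 2 : ℝ) - 1 = 1 / 2 by norm_num,
    ← Real.sqrt_eq_rpow, mul_assoc]
  gcongr
  exact abs_qz_le_grad2 g p

theorem continuous_grad2 (hg : ContDiff ℝ 1 g) : Continuous (grad2 g) :=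
  (((continuous_qy hg).pow 2).add ((continuous_qz hg).pow 2)).sqrt

theorem sq_setIntegral_sqrt_abs_mul_grad2_le (hg : ContDiff ℝ 1 g) {K : Set Pt2}
    (hK : IsCompact K) :
    (∫ p in K, √|g p| * grad2 g p) ^ 2 ≤ (∫ p in K, |g p|) * ∫ p in K, grad2 g p ^ 2 := by
  have hint : ∀ f : Pt2 → ℝ, Continuous f → IntegrableOn f K := fun f hf =>
    hf.continuousOn.integrableOn_compact hK
  have hsqrt : Continuous fun p => √|g p| := hg.continuous.abs.sqrt
  have hsq : ∀ p, √|g p| ^ 2 = |g p| := fun p => Real.sq_sqrt (abs_nonneg _)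
  simpa only [hsq] using sq_integral_mul_le_integral_sq_mul_integral_sq
    (hint _ (hsqrt.pow 2)) (hint _ ((continuous_grad2 hg).pow 2))
    (hint _ (hsqrt.mul (continuous_grad2 hg)))

theorem contDiff_abs_rpow_three_halves (hg : ContDiff ℝ 1 g) :
    ContDiff ℝ 1 fun q => |g q| ^ (3 / 2 : ℝ) := by
  simpa only [Real.norm_eq_abs] using hg.norm_rpow (p := 3 / 2) (by norm_num)

theorem setIntegral_abs_qy_abs_rpow_three_halves_le (hg : ContDiff ℝ 1 g) {K : Set Pt2}
    (hK : IsCompact K) :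
    ∫ p in K, |qy (fun q => |g q| ^ (3 / 2 : ℝ)) p| ≤
      3 / 2 * ∫ p in K, √|g p| * grad2 g p := by
  have hint : ∀ f : Pt2 → ℝ, Continuous f → IntegrableOn f K := fun f hf =>
    hf.continuousOn.integrableOn_compact hK
  rw [← integral_const_mul]
  exact integral_mono (hint _ (continuous_qy (contDiff_abs_rpow_three_halves hg)).abs)
    (hint _ (continuous_const.mul (hg.continuous.abs.sqrt.mul (continuous_grad2 hg))))
    (abs_qy_abs_rpow_three_halves_le hg)

theorem setIntegral_abs_qz_abs_rpow_three_halves_le (hg : ContDiff ℝ 1 g) {K : Set Pt2}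
    (hK : IsCompact K) :
    ∫ p in K, |qz (fun q => |g q| ^ (3 / 2 : ℝ)) p| ≤
      3 / 2 * ∫ p in K, √|g p| * grad2 g p := by
  have hint : ∀ f : Pt2 → ℝ, Continuous f → IntegrableOn f K := fun f hf =>
    hf.continuousOn.integrableOn_compact hK
  rw [← integral_const_mul]
  exact integral_mono (hint _ (continuous_qz (contDiff_abs_rpow_three_halves hg)).abs)
    (hint _ (continuous_const.mul (hg.continuous.abs.sqrt.mul (continuous_grad2 hg))))
    (abs_qz_abs_rpow_three_halves_le hg)

end ThreeHalvesPower

theorem Lp2_natCast_pow {n : ℕ} (hn : n ≠ 0) (f : Pt2 → ℝ) :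
    Lp2 n f ^ n = ∫ q in Dom2, |f q| ^ n := by
  simp only [Lp2, Real.rpow_natCast]
  rw [← Real.rpow_natCast, ← Real.rpow_mul (integral_nonneg fun q => by positivity),
    one_div_mul_cancel (Nat.cast_ne_zero.2 hn), Real.rpow_one]

/-- Explicit-constant Sobolev inequality: for `g ∈ H¹(I × 𝕋)` vanishing at `y = ±1`
and with zero `z`-average, `‖g‖³_{L³} ≤ (9/4) ‖g‖_{L¹} ‖∇g‖²_{L²}`. -/
theorem stmt_14 :
    ∀ g : Pt2 → ℝ,
      ContDiff ℝ 1 g → PerZ2 g →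
      (∀ z : ℝ, g (1, z) = 0 ∧ g (-1, z) = 0) →
      (∀ y : ℝ, (∫ z in (0:ℝ)..(2*π), g (y, z)) = 0) →
      (Lp2 3 g) ^ 3 ≤ 9/4 * Lp2 1 g * (Lp2 2 (grad2 g)) ^ 2 := by
  intro g hg _ hb hm
  set u : Pt2 → ℝ := fun q => |g q| ^ (3 / 2 : ℝ)
  have hzero_y : ∀ z ∈ Icc 0 (2 * π), ∃ y ∈ Icc (-1) 1, u (y, z) = 0 := fun z _ =>
    ⟨1, by norm_num, by simp [u, (hb z).1]⟩
  have hzero_z : ∀ y ∈ Icc (-1) 1, ∃ z ∈ Icc 0 (2 * π), u (y, z) = 0 := fun y _ => by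
    obtain ⟨z, hz, hgz⟩ := exists_mem_Icc_eq_zero_of_intervalIntegral_eq_zero (by positivity)
      (hg.continuous.comp (continuous_const.prodMk continuous_id)).continuousOn (hm y)
    exact ⟨z, hz, by simp [u, show g (y, z) = 0 from hgz]⟩
  have hDom2 : IsCompact Dom2 := isCompact_Icc.prod isCompact_Icc
  have hcube : Lp2 3 g ^ 3 = ∫ p in Dom2, u p ^ 2 := by
    simp only [u, abs_rpow_three_halves_sq]; exact_mod_cast Lp2_natCast_pow three_ne_zero g
  have hL1 : Lp2 1 g = ∫ p in Dom2, |g p| := by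
    simpa using Lp2_natCast_pow one_ne_zero g
  have hL2 : Lp2 2 (grad2 g) ^ 2 = ∫ p in Dom2, grad2 g p ^ 2 := by
    simpa only [sq_abs, Nat.cast_ofNat] using Lp2_natCast_pow two_ne_zero (grad2 g)
  set X := ∫ p in Dom2, √|g p| * grad2 g p
  have hqy0 : 0 ≤ ∫ p in Dom2, |qy u p| := integral_nonneg fun _ => abs_nonneg _
  have hqy := setIntegral_abs_qy_abs_rpow_three_halves_le hg hDom2
  rw [hcube, hL1, hL2]
  calc ∫ p in Dom2, u p ^ 2
      ≤ (∫ p in Dom2, |qy u p|) * ∫ p in Dom2, |qz u p| :=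
        setIntegral_sq_le_setIntegral_abs_qy_mul_setIntegral_abs_qz
          (contDiff_abs_rpow_three_halves hg) hzero_y hzero_z
    _ ≤ (3 / 2 * X) * (3 / 2 * X) :=
        mul_le_mul hqy (setIntegral_abs_qz_abs_rpow_three_halves_le hg hDom2)
          (integral_nonneg fun _ => abs_nonneg _) (hqy0.trans hqy)
    _ = 9 / 4 * X ^ 2 := by ring
    _ ≤ 9 / 4 * ((∫ p in Dom2, |g p|) * ∫ p in Dom2, grad2 g p ^ 2) :=
        by gcongr; exact sq_setIntegral_sqrt_abs_mul_grad2_le hg hDom2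
    _ = _ := by ring
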